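/- Let g be a positive integer, let τ be a symmetric g×g complex matrix whose imaginary part is positive definite, and let (λ_ε)_{ε ∈ {0,1}^g} be complex scalars. Then the following are equivalent: (i) the function (U,V,W,c,d) ↦ ∑_{ε ∈ {0,1}^g} λ_ε · F[ε](U,V,W,c,d) is independent of c and d (its value is unchanged when c and d vary with U, V, W fixed); (ii) ∑_{ε} λ_ε · Q[ε] = 0 (as a g×g matrix) and ∑_{ε} λ_ε · θ̂[ε](0) = 0. Moreover, when these conditions hold, ∑_{ε} λ_ε · F[ε](U,V,W,c,d) = ∑_{ε} λ_ε · ∂_U⁴θ̂[ε](0) for all U, V, W, c, d; in particular the combination is also independent of V and W and is a quartic polynomial in U alone. -/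

import Mathlib

open Complex

/-- The second-order theta function `θ̂[ε](z)`. -/
noncomputable def thetaHat {g : ℕ} (τ : Matrix (Fin g) (Fin g) ℂ)
    (ε : Fin g → ℤ) (z : Fin g → ℂ) : ℂ :=
  ∑' n : Fin g → ℤ,
    Complex.exp (2 * (Real.pi : ℂ) * Complex.I *
        (∑ i, ∑ j, ((n i : ℂ) + (ε i : ℂ) / 2) * τ i j * ((n j : ℂ) + (ε j : ℂ) / 2))
      + 2 * (Real.pi : ℂ) * Complex.I * ∑ i, ((n i : ℂ) + (ε i : ℂ) / 2) * z i)

/-- The directional derivative operator `∂_U = u₁ ∂/∂z₁ + ⋯ + u_g ∂/∂z_g`. -/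
noncomputable def dd {g : ℕ} (U : Fin g → ℂ) (f : (Fin g → ℂ) → ℂ)
    (z : Fin g → ℂ) : ℂ :=
  fderiv ℂ f z U

/-- The Dubrovin quartic `F[ε](U,V,W,c,d)`. -/
noncomputable def dubrovinQuartic {g : ℕ} (τ : Matrix (Fin g) (Fin g) ℂ)
    (ε : Fin g → ℤ) (U V W : Fin g → ℂ) (c d : ℂ) : ℂ :=
  (dd U)^[4] (thetaHat τ ε) 0 - dd U (dd W (thetaHat τ ε)) 0
    + (3 / 2) * c * (dd U)^[2] (thetaHat τ ε) 0
    + (3 / 4) * (dd V)^[2] (thetaHat τ ε) 0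
    + d * thetaHat τ ε 0

/-- The Hessian matrix `Q[ε] = (∂²θ̂[ε]/∂z_i∂z_j(0))_{i,j}` of `θ̂[ε]` at `0`. -/
noncomputable def hessQ {g : ℕ} (τ : Matrix (Fin g) (Fin g) ℂ)
    (ε : Fin g → ℤ) (i j : Fin g) : ℂ :=
  dd (Pi.single i 1) (dd (Pi.single j 1) (thetaHat τ ε)) 0

/-!
The theta series is a sum of exponentials `exp (ℓₙ z) · cₙ` of linear forms `ℓₙ` whose
coefficients decay like a Gaussian in `‖ℓₙ‖` because `Im τ` is positive definite, so it may be
differentiated termwise and `θ̂[ε]` is `C²`. Hence `∂_U ∂_W θ̂[ε](0) = D²θ̂[ε](0)(U, W)` for a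
symmetric bilinear form whose matrix is `Q[ε]`, and with `B = ∑ λ_ε D²θ̂[ε](0)`
`∑ λ_ε F[ε] = ∑ λ_ε ∂_U⁴θ̂[ε](0) - B(U, W) + (3/2) c B(U, U) + (3/4) B(V, V) + d ∑ λ_ε θ̂[ε](0)`.
So the combination is independent of `c` and `d` iff `B` vanishes on the diagonal and
`∑ λ_ε θ̂[ε](0) = 0`, and by polarization a symmetric `B` vanishes on the diagonal iff `B = 0`,
i.e. iff `∑ λ_ε Q[ε] = 0`.
-/

open Finset Matrix Real

lemma Summable.fintype_prod_of_nonneg {ι κ : Type*} [Fintype ι] {f : κ → ℝ} (hf : Summable f)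
    (h0 : 0 ≤ f) : Summable fun x : ι → κ => ∏ i, f (x i) := by
  classical
  refine summable_of_sum_le (c := ∏ _i : ι, ∑' m, f m) (fun x => prod_nonneg fun i _ => h0 _)
    fun s => ?_
  set T : Finset κ := s.biUnion fun x => univ.image x
  calc ∑ x ∈ s, ∏ i, f (x i) ≤ ∑ x ∈ Fintype.piFinset fun _ => T, ∏ i, f (x i) :=
        sum_le_sum_of_subset_of_nonneg
          (fun x hx => Fintype.mem_piFinset.mpr fun i => mem_biUnion.mpr
            ⟨x, hx, mem_image_of_mem x (mem_univ i)⟩)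
          fun x _ _ => prod_nonneg fun i _ => h0 _
    _ = ∏ _i : ι, ∑ m ∈ T, f m := (prod_univ_sum _ _).symm
    _ ≤ ∏ _i : ι, ∑' m, f m :=
        prod_le_prod (fun _ _ => sum_nonneg fun m _ => h0 m)
          fun _ _ => hf.sum_le_tsum T fun m _ => h0 m

lemma summable_exp_neg_abs_int : Summable fun m : ℤ => Real.exp (-|(m : ℝ)|) := by
  apply Summable.of_nat_of_neg <;> simpa using Real.summable_exp_neg_nat

lemma summable_exp_neg_sq_norm_add {ι : Type*} [Fintype ι] {a : ℝ} (ha : 0 < a) (b : ℝ)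
    (w : ι → ℝ) :
    Summable fun n : ι → ℤ =>
      Real.exp (-a * ‖fun i => (n i : ℝ) + w i‖ ^ 2 + b * ‖fun i => (n i : ℝ) + w i‖) := by
  set m : ℝ := (Fintype.card ι : ℝ)
  -- The Gaussian beats `exp (-m t)`, and `exp (-m ‖n + w‖)` is bounded by `∏ i, exp (-|n i|)`.
  have hprod :=
    summable_exp_neg_abs_int.fintype_prod_of_nonneg (ι := ι) fun _ => (Real.exp_pos _).le
  refine (hprod.mul_left (Real.exp ((b + m) ^ 2 / (4 * a) + m * ‖w‖))).of_nonneg_of_le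
    (fun _ => by positivity) fun n => ?_
  set t := ‖fun i => (n i : ℝ) + w i‖
  have hquad : -a * t ^ 2 + (b + m) * t ≤ (b + m) ^ 2 / (4 * a) := by
    rw [le_div_iff₀ (by positivity)]
    nlinarith [sq_nonneg (2 * a * t - (b + m))]
  have habs : ∑ i, |(n i : ℝ)| ≤ m * (t + ‖w‖) := by
    have hi : ∀ i, |(n i : ℝ)| ≤ t + ‖w‖ := fun i => by
      have h1 := norm_le_pi_norm (fun i => (n i : ℝ) + w i) i
      have h2 := norm_le_pi_norm w i
      simp only [Real.norm_eq_abs] at h1 h2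
      calc |(n i : ℝ)| = |((n i : ℝ) + w i) - w i| := by ring_nf
        _ ≤ |(n i : ℝ) + w i| + |w i| := abs_sub _ _
        _ ≤ t + ‖w‖ := add_le_add h1 h2
    simpa [m, mul_add] using sum_le_sum fun i (_ : i ∈ univ) => hi i
  rw [← Real.exp_sum, ← Real.exp_add, Real.exp_le_exp, sum_neg_distrib]
  nlinarith

lemma Matrix.PosDef.exists_pos_mul_sq_norm_le {ι : Type*} [Fintype ι] {M : Matrix ι ι ℝ}
    (hM : M.PosDef) : ∃ c > 0, ∀ x : ι → ℝ, c * ‖x‖ ^ 2 ≤ x ⬝ᵥ M *ᵥ x := by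
  have hcont : Continuous fun x : ι → ℝ => x ⬝ᵥ M *ᵥ x := by fun_prop
  obtain ⟨c, hc, hle⟩ := (isCompact_sphere (0 : ι → ℝ) 1).exists_forall_le' hcont.continuousOn
    (a := 0) fun x hx => by
      simpa using hM.dotProduct_mulVec_pos (x := x) (ne_zero_of_mem_unit_sphere ⟨x, hx⟩)
  refine ⟨c, hc, fun x => ?_⟩
  rcases eq_or_ne x 0 with rfl | hx
  · simp
  have hxn : 0 < ‖x‖ := norm_pos_iff.mpr hx
  have hy : ‖x‖⁻¹ • x ∈ Metric.sphere (0 : ι → ℝ) 1 := by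
    simp [norm_smul, hxn.ne']
  calc c * ‖x‖ ^ 2 ≤ (‖x‖⁻¹ • x) ⬝ᵥ M *ᵥ (‖x‖⁻¹ • x) * ‖x‖ ^ 2 := by gcongr; exact hle _ hy
    _ = x ⬝ᵥ M *ᵥ x := by
      simp only [mulVec_smul, smul_dotProduct, dotProduct_smul, smul_eq_mul]
      field_simp

universe u

section ExponentialSeries

-- `E` and `F` share a universe so that the induction in `contDiff_tsum_cexp_smul` may replace
-- `F` by `E →L[ℂ] F`.
variable {E F : Type u} [NormedAddCommGroup E] [NormedSpace ℂ E]
  [NormedAddCommGroup F] [NormedSpace ℂ F] {ι : Type*}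

lemma norm_cexp_smul_le (ℓ : E →L[ℂ] ℂ) (c : F) {z : E} {R : ℝ} (hz : ‖z‖ ≤ R) :
    ‖cexp (ℓ z) • c‖ ≤ ‖c‖ * Real.exp (R * ‖ℓ‖) := by
  rw [norm_smul, Complex.norm_exp, mul_comm]
  gcongr
  calc (ℓ z).re ≤ ‖ℓ z‖ := re_le_norm _
    _ ≤ ‖ℓ‖ * ‖z‖ := ℓ.le_opNorm z
    _ ≤ R * ‖ℓ‖ := by rw [mul_comm]; gcongr

lemma hasFDerivAt_cexp_smul (ℓ : E →L[ℂ] ℂ) (c : F) (z : E) :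
    HasFDerivAt (fun z => cexp (ℓ z) • c) (cexp (ℓ z) • ℓ.smulRight c) z := by
  convert (ℓ.hasFDerivAt.cexp).smul_const c using 1
  ext x
  simp [smul_smul]

lemma summable_norm_smulRight_mul_exp {c : ι → F} {ℓ : ι → E →L[ℂ] ℂ}
    (h : ∀ R : ℝ, Summable fun n => ‖c n‖ * Real.exp (R * ‖ℓ n‖)) (R : ℝ) :
    Summable fun n => ‖(ℓ n).smulRight (c n)‖ * Real.exp (R * ‖ℓ n‖) := by
  refine (h (R + 1)).of_nonneg_of_le (fun n => by positivity) fun n => ?_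
  rw [ContinuousLinearMap.norm_smulRight_apply, add_one_mul, Real.exp_add]
  have : ‖ℓ n‖ ≤ Real.exp ‖ℓ n‖ := by linarith [Real.add_one_le_exp ‖ℓ n‖]
  calc ‖ℓ n‖ * ‖c n‖ * Real.exp (R * ‖ℓ n‖)
      ≤ Real.exp ‖ℓ n‖ * ‖c n‖ * Real.exp (R * ‖ℓ n‖) := by gcongr
    _ = _ := by ring

variable [CompleteSpace F]

lemma summable_cexp_smul {c : ι → F} {ℓ : ι → E →L[ℂ] ℂ}
    (h : ∀ R : ℝ, Summable fun n => ‖c n‖ * Real.exp (R * ‖ℓ n‖)) (z : E) :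
    Summable fun n => cexp (ℓ n z) • c n :=
  .of_norm_bounded (h ‖z‖) fun n => norm_cexp_smul_le (ℓ n) (c n) le_rfl

lemma hasFDerivAt_tsum_cexp_smul {c : ι → F} {ℓ : ι → E →L[ℂ] ℂ}
    (h : ∀ R : ℝ, Summable fun n => ‖c n‖ * Real.exp (R * ‖ℓ n‖)) (z : E) :
    HasFDerivAt (fun z => ∑' n, cexp (ℓ n z) • c n)
      (∑' n, cexp (ℓ n z) • (ℓ n).smulRight (c n)) z := by
  have hz : z ∈ Metric.ball (0 : E) (‖z‖ + 1) := by simp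
  refine hasFDerivAt_tsum_of_isPreconnected (summable_norm_smulRight_mul_exp h (‖z‖ + 1))
    Metric.isOpen_ball (convex_ball _ _).isPreconnected
    (fun n x _ => hasFDerivAt_cexp_smul (ℓ n) (c n) x) (fun n x hx => ?_) hz
    (summable_cexp_smul h z) hz
  refine norm_cexp_smul_le (ℓ n) ((ℓ n).smulRight (c n)) ?_
  simpa using (Metric.mem_ball.mp hx).le

theorem contDiff_tsum_cexp_smul {c : ι → F} {ℓ : ι → E →L[ℂ] ℂ}
    (h : ∀ R : ℝ, Summable fun n => ‖c n‖ * Real.exp (R * ‖ℓ n‖)) (k : ℕ) :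
    ContDiff ℂ k fun z : E => ∑' n, cexp (ℓ n z) • c n := by
  induction k generalizing F with
  | zero =>
    exact contDiff_zero.mpr <| continuous_iff_continuousAt.mpr fun z =>
      (hasFDerivAt_tsum_cexp_smul h z).continuousAt
  | succ k ih =>
    rw [Nat.cast_succ, contDiff_succ_iff_hasFDerivAt]
    exact ⟨_, ih (F := E →L[ℂ] F) (summable_norm_smulRight_mul_exp h),
      hasFDerivAt_tsum_cexp_smul h⟩

end ExponentialSeries

section Theta

variable {g : ℕ}

noncomputable def thetaShift (ε n : Fin g → ℤ) : Fin g → ℝ := fun i => (n i : ℝ) + (ε i : ℝ) / 2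

noncomputable def thetaLinearForm (ε n : Fin g → ℤ) : (Fin g → ℂ) →L[ℂ] ℂ :=
  ∑ i, (2 * π * I * thetaShift ε n i) • ContinuousLinearMap.proj i

noncomputable def thetaCoeff (τ : Matrix (Fin g) (Fin g) ℂ) (ε n : Fin g → ℤ) : ℂ :=
  cexp (2 * π * I * ∑ i, ∑ j, (thetaShift ε n i : ℂ) * τ i j * thetaShift ε n j)

lemma thetaHat_eq_tsum (τ : Matrix (Fin g) (Fin g) ℂ) (ε : Fin g → ℤ) :
    thetaHat τ ε = fun z => ∑' n, cexp (thetaLinearForm ε n z) • thetaCoeff τ ε n := by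
  ext z
  refine tsum_congr fun n => ?_
  simp only [thetaCoeff, thetaLinearForm, thetaShift, smul_eq_mul, ← Complex.exp_add,
    _root_.sum_apply, _root_.smul_apply,
    ContinuousLinearMap.proj_apply, mul_sum]
  push_cast
  ring_nf

lemma norm_thetaLinearForm_le (ε n : Fin g → ℤ) :
    ‖thetaLinearForm ε n‖ ≤ 2 * π * g * ‖thetaShift ε n‖ := by
  refine ContinuousLinearMap.opNorm_le_bound _ (by positivity) fun z => ?_
  simp only [thetaLinearForm, _root_.sum_apply, _root_.smul_apply,
    ContinuousLinearMap.proj_apply, smul_eq_mul]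
  calc ‖∑ i, 2 * π * I * thetaShift ε n i * z i‖
      ≤ ∑ i : Fin g, 2 * π * (‖thetaShift ε n‖ * ‖z‖) := by
        refine (norm_sum_le _ _).trans (sum_le_sum fun i _ => ?_)
        simp only [norm_mul, Complex.norm_real, Complex.norm_ofNat, norm_I,
          Complex.norm_of_nonneg Real.pi_pos.le]
        rw [mul_one, mul_assoc (2 * π)]
        gcongr
        exacts [norm_le_pi_norm _ i, norm_le_pi_norm z i]
    _ = 2 * π * g * ‖thetaShift ε n‖ * ‖z‖ := by simp; ring

lemma re_thetaExponent (τ : Matrix (Fin g) (Fin g) ℂ) (v : Fin g → ℝ) :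
    (2 * π * I * ∑ i, ∑ j, (v i : ℂ) * τ i j * v j).re
      = -(2 * π) * (v ⬝ᵥ (Matrix.of fun i j => (τ i j).im) *ᵥ v) := by
  simp only [dotProduct, mulVec, mul_sum, Complex.re_sum, Matrix.of_apply]
  refine sum_congr rfl fun i _ => sum_congr rfl fun j _ => ?_
  simp [Complex.mul_re, Complex.mul_im]
  ring

lemma summable_norm_thetaCoeff_mul_exp {τ : Matrix (Fin g) (Fin g) ℂ}
    (hpos : (Matrix.of fun i j => (τ i j).im).PosDef) (ε : Fin g → ℤ) (R : ℝ) :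
    Summable fun n => ‖thetaCoeff τ ε n‖ * Real.exp (R * ‖thetaLinearForm ε n‖) := by
  obtain ⟨c, hc, hle⟩ := hpos.exists_pos_mul_sq_norm_le
  refine (summable_exp_neg_sq_norm_add (by positivity : 0 < 2 * π * c) (|R| * (2 * π * g))
    fun i => (ε i : ℝ) / 2).of_nonneg_of_le (fun _ => by positivity) fun n => ?_
  have hR : R * ‖thetaLinearForm ε n‖ ≤ |R| * (2 * π * g) * ‖thetaShift ε n‖ := by
    calc R * ‖thetaLinearForm ε n‖ ≤ |R| * ‖thetaLinearForm ε n‖ := by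
          gcongr; exact le_abs_self R
      _ ≤ |R| * (2 * π * g * ‖thetaShift ε n‖) := by gcongr; exact norm_thetaLinearForm_le ε n
      _ = _ := by ring
  have hQ := hle (thetaShift ε n)
  rw [thetaCoeff, Complex.norm_exp, re_thetaExponent, ← Real.exp_add, Real.exp_le_exp]
  change _ ≤ -(2 * π * c) * ‖thetaShift ε n‖ ^ 2 + |R| * (2 * π * g) * ‖thetaShift ε n‖
  nlinarith [Real.pi_pos]

theorem contDiff_thetaHat {τ : Matrix (Fin g) (Fin g) ℂ}
    (hpos : (Matrix.of fun i j => (τ i j).im).PosDef) (ε : Fin g → ℤ) (k : ℕ) :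
    ContDiff ℂ k (thetaHat τ ε) := by
  rw [thetaHat_eq_tsum]
  exact contDiff_tsum_cexp_smul (summable_norm_thetaCoeff_mul_exp hpos ε) k

end Theta

section Bilinear

variable {𝕜 E F : Type*} [NontriviallyNormedField 𝕜] [NormedAddCommGroup E] [NormedSpace 𝕜 E]
  [NormedAddCommGroup F] [NormedSpace 𝕜 F]

lemma ContinuousLinearMap.eq_zero_of_forall_apply_self [CharZero 𝕜] {B : E →L[𝕜] E →L[𝕜] F}
    (hB : ∀ x y, B x y = B y x) (h : ∀ x, B x x = 0) : B = 0 := by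
  ext x y
  have hxy : (2 : 𝕜) • B x y = 0 := by
    have := h (x + y)
    simp only [map_add, _root_.add_apply, h x, h y, hB y x, zero_add, add_zero] at this
    rwa [two_smul]
  simpa using (smul_eq_zero.mp hxy).resolve_left two_ne_zero

lemma ContinuousLinearMap.eq_zero_of_forall_single {ι : Type*} [Fintype ι] [DecidableEq ι]
    {B : (ι → 𝕜) →L[𝕜] (ι → 𝕜) →L[𝕜] F}
    (h : ∀ i j, B (Pi.single i 1) (Pi.single j 1) = 0) : B = 0 := by
  refine coe_injective <| (Pi.basisFun 𝕜 ι).ext fun i => coe_injective <|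
    (Pi.basisFun 𝕜 ι).ext fun j => ?_
  simpa using h i j

end Bilinear

lemma dd_dd_eq_fderiv_fderiv {g : ℕ} {f : (Fin g → ℂ) → ℂ} {x : Fin g → ℂ}
    (hf : DifferentiableAt ℂ (fderiv ℂ f) x) (U W : Fin g → ℂ) :
    dd U (dd W f) x = fderiv ℂ (fderiv ℂ f) x U W := by
  change fderiv ℂ (fun y => fderiv ℂ f y W) x U = _
  simp [fderiv_clm_apply hf (differentiableAt_const W)]

section ThetaHessian

variable {g : ℕ} {τ : Matrix (Fin g) (Fin g) ℂ}

noncomputable def thetaHessian (τ : Matrix (Fin g) (Fin g) ℂ) (ε : Fin g → ℤ) :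
    (Fin g → ℂ) →L[ℂ] (Fin g → ℂ) →L[ℂ] ℂ :=
  fderiv ℂ (fderiv ℂ (thetaHat τ ε)) 0

variable (hpos : (Matrix.of fun i j => (τ i j).im).PosDef)
include hpos

lemma dd_dd_thetaHat (ε : Fin g → ℤ) (U W : Fin g → ℂ) :
    dd U (dd W (thetaHat τ ε)) 0 = thetaHessian τ ε U W :=
  dd_dd_eq_fderiv_fderiv
    (((contDiff_thetaHat hpos ε 2).fderiv_right (m := 1) le_rfl).differentiable one_ne_zero _) U W

lemma thetaHessian_comm (ε : Fin g → ℤ) (U W : Fin g → ℂ) :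
    thetaHessian τ ε U W = thetaHessian τ ε W U :=
  (contDiff_thetaHat hpos ε 2).contDiffAt.isSymmSndFDerivAt (by simp) U W

lemma hessQ_eq_thetaHessian (ε : Fin g → ℤ) (i j : Fin g) :
    hessQ τ ε i j = thetaHessian τ ε (Pi.single i 1) (Pi.single j 1) :=
  dd_dd_thetaHat hpos ε _ _

lemma dubrovinQuartic_eq (ε : Fin g → ℤ) (U V W : Fin g → ℂ) (c d : ℂ) :
    dubrovinQuartic τ ε U V W c d = (dd U)^[4] (thetaHat τ ε) 0 - thetaHessian τ ε U W
      + 3 / 2 * c * thetaHessian τ ε U U + 3 / 4 * thetaHessian τ ε V V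
      + d * thetaHat τ ε 0 := by
  simp only [dubrovinQuartic, Function.iterate_succ, Function.iterate_zero, Function.comp_apply,
    id, dd_dd_thetaHat hpos]

lemma sum_mul_dubrovinQuartic {ι : Type*} [Fintype ι] (lam : ι → ℂ) (ε : ι → Fin g → ℤ)
    (U V W : Fin g → ℂ) (c d : ℂ) :
    ∑ k, lam k * dubrovinQuartic τ (ε k) U V W c d
      = ∑ k, lam k * (dd U)^[4] (thetaHat τ (ε k)) 0
        - (∑ k, lam k • thetaHessian τ (ε k)) U W
        + 3 / 2 * c * (∑ k, lam k • thetaHessian τ (ε k)) U U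
        + 3 / 4 * (∑ k, lam k • thetaHessian τ (ε k)) V V
        + d * ∑ k, lam k * thetaHat τ (ε k) 0 := by
  simp only [dubrovinQuartic_eq hpos, _root_.sum_apply, _root_.smul_apply, smul_eq_mul, mul_sum,
    ← sum_sub_distrib, ← sum_add_distrib]
  exact sum_congr rfl fun k _ => by ring

end ThetaHessian

theorem dubrovin_combination_independent_iff_general (g : ℕ)
    (τ : Matrix (Fin g) (Fin g) ℂ)
    (hpos : (Matrix.of fun i j => (τ i j).im).PosDef)
    (lam : (Fin g → Fin 2) → ℂ) :
    ((∀ (U V W : Fin g → ℂ) (c₁ d₁ c₂ d₂ : ℂ),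
        (∑ ε : Fin g → Fin 2,
            lam ε * dubrovinQuartic τ (fun i => ((ε i : ℕ) : ℤ)) U V W c₁ d₁) =
          ∑ ε : Fin g → Fin 2,
            lam ε * dubrovinQuartic τ (fun i => ((ε i : ℕ) : ℤ)) U V W c₂ d₂) ↔
      ((∀ i j : Fin g,
          (∑ ε : Fin g → Fin 2, lam ε * hessQ τ (fun i => ((ε i : ℕ) : ℤ)) i j) = 0) ∧
        (∑ ε : Fin g → Fin 2, lam ε * thetaHat τ (fun i => ((ε i : ℕ) : ℤ)) 0) = 0)) ∧
    (((∀ i j : Fin g,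
          (∑ ε : Fin g → Fin 2, lam ε * hessQ τ (fun i => ((ε i : ℕ) : ℤ)) i j) = 0) ∧
        (∑ ε : Fin g → Fin 2, lam ε * thetaHat τ (fun i => ((ε i : ℕ) : ℤ)) 0) = 0) →
      ∀ (U V W : Fin g → ℂ) (c d : ℂ),
        (∑ ε : Fin g → Fin 2,
            lam ε * dubrovinQuartic τ (fun i => ((ε i : ℕ) : ℤ)) U V W c d) =
          ∑ ε : Fin g → Fin 2,
            lam ε * (dd U)^[4] (thetaHat τ (fun i => ((ε i : ℕ) : ℤ))) 0) := by
  have hF := sum_mul_dubrovinQuartic hpos lam fun ε i => ((ε i : ℕ) : ℤ)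
  set B := ∑ ε : Fin g → Fin 2, lam ε • thetaHessian τ (fun i => ((ε i : ℕ) : ℤ))
  have hQ : ∀ i j : Fin g, ∑ ε : Fin g → Fin 2, lam ε * hessQ τ (fun i => ((ε i : ℕ) : ℤ)) i j
      = B (Pi.single i 1) (Pi.single j 1) := fun i j => by
    simp [B, hessQ_eq_thetaHessian hpos]
  have hB : ∀ x y, B x y = B y x := fun x y => by
    simp [B, thetaHessian_comm hpos _ x y]
  simp only [hQ]
  rw [show (∀ i j : Fin g, B (Pi.single i 1) (Pi.single j 1) = 0) ↔ B = 0 from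
    ⟨ContinuousLinearMap.eq_zero_of_forall_single, fun h i j => by simp [h]⟩]
  refine ⟨⟨fun h => ⟨ContinuousLinearMap.eq_zero_of_forall_apply_self hB fun U => ?_, ?_⟩,
    fun ⟨hB0, hT⟩ U V W c₁ d₁ c₂ d₂ => by simp [hF, hB0, hT]⟩,
    fun ⟨hB0, hT⟩ U V W c d => by simp [hF, hB0, hT]⟩
  · have := h U 0 0 1 0 0 0
    simp only [hF] at this
    linear_combination (2 / 3 : ℂ) * this
  · have := h 0 0 0 0 1 0 0
    simp only [hF] at this
    linear_combination this

/-- A linear combination `∑_ε λ_ε F[ε]` of the Dubrovin quartics is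
independent of `c` and `d` if and only if `∑_ε λ_ε Q[ε] = 0` and
`∑_ε λ_ε θ̂[ε](0) = 0`; moreover, in that case the combination equals
`∑_ε λ_ε ∂_U⁴θ̂[ε](0)`, a quartic in `U` alone. -/
theorem dubrovin_combination_independent_iff (g : ℕ) (hg : 0 < g)
    (τ : Matrix (Fin g) (Fin g) ℂ) (hsym : τ.IsSymm)
    (hpos : (Matrix.of fun i j => (τ i j).im).PosDef)
    (lam : (Fin g → Fin 2) → ℂ) :
    ((∀ (U V W : Fin g → ℂ) (c₁ d₁ c₂ d₂ : ℂ),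
        (∑ ε : Fin g → Fin 2,
            lam ε * dubrovinQuartic τ (fun i => ((ε i : ℕ) : ℤ)) U V W c₁ d₁) =
          ∑ ε : Fin g → Fin 2,
            lam ε * dubrovinQuartic τ (fun i => ((ε i : ℕ) : ℤ)) U V W c₂ d₂) ↔
      ((∀ i j : Fin g,
          (∑ ε : Fin g → Fin 2, lam ε * hessQ τ (fun i => ((ε i : ℕ) : ℤ)) i j) = 0) ∧
        (∑ ε : Fin g → Fin 2, lam ε * thetaHat τ (fun i => ((ε i : ℕ) : ℤ)) 0) = 0)) ∧
    (((∀ i j : Fin g,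
          (∑ ε : Fin g → Fin 2, lam ε * hessQ τ (fun i => ((ε i : ℕ) : ℤ)) i j) = 0) ∧
        (∑ ε : Fin g → Fin 2, lam ε * thetaHat τ (fun i => ((ε i : ℕ) : ℤ)) 0) = 0) →
      ∀ (U V W : Fin g → ℂ) (c d : ℂ),
        (∑ ε : Fin g → Fin 2,
            lam ε * dubrovinQuartic τ (fun i => ((ε i : ℕ) : ℤ)) U V W c d) =
          ∑ ε : Fin g → Fin 2,
            lam ε * (dd U)^[4] (thetaHat τ (fun i => ((ε i : ℕ) : ℤ))) 0) :=
  dubrovin_combination_independent_iff_general g τ hpos lam
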